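/- arXiv:1711.08087 — 2 statements merged into one kernel-verified Lean document; each statement's English description precedes it below -/
import Mathlib

section
/- Let R be a commutative ring and let G(R) ≤ Sp₆(R) be the image of SL₂(R)³ under the interleaved block embedding. The stabilizer in G(R) of the point γ₀ ∈ [P,P](R)∖Sp₆(R) (equivalently, the set of triples (u₁,u₂,u₃) ∈ SL₂(R)³ with γ₀·ι(u₁,u₂,u₃)·γ₀⁻¹ ∈ [P,P](R)) is exactly N₀(R) = { ( [[1,t₁],[0,1]], [[1,t₂],[0,1]], [[1,t₃],[0,1]] ) : tᵢ ∈ R, t₁ + t₂ + t₃ = 0 }. -/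
open Matrix

/-- The representative γ₀ of the open orbit (Lemma 2.1 of the paper). -/
def gamma0 (R : Type*) [CommRing R] : Matrix (Fin 6) (Fin 6) R :=
  !![0,0,0,-1,0,0;
     0,1,0,0,0,0;
     0,0,1,0,0,0;
     1,1,1,0,0,0;
     0,0,0,-1,1,0;
     0,0,0,-1,0,1]

/-- The interleaved block-diagonal embedding `ι : SL₂³ → Sp₆`. -/
def interleave (R : Type*) [CommRing R] (g : Fin 3 → Matrix (Fin 2) (Fin 2) R) :
    Matrix (Fin 6) (Fin 6) R :=
  Matrix.of fun i j =>
    if h : (i : ℕ) % 3 = (j : ℕ) % 3 then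
      g ⟨(i : ℕ) % 3, by omega⟩
        ⟨(i : ℕ) / 3, by have := i.isLt; omega⟩
        ⟨(j : ℕ) / 3, by have := j.isLt; omega⟩
    else 0

/-- Membership in `[P,P](R)`, the derived group of the Siegel parabolic:
`p = diag(A, ᵀA⁻¹)·[[1,Z],[0,1]]` with `det A = 1` and `Z` symmetric
(transported from `Fin 3 ⊕ Fin 3` indexing to `Fin 6` indexing). -/
def inPP (R : Type*) [CommRing R] (p : Matrix (Fin 6) (Fin 6) R) : Prop :=
  ∃ A Z : Matrix (Fin 3) (Fin 3) R, A.det = 1 ∧ Z.IsSymm ∧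
    p = Matrix.reindex finSumFinEquiv finSumFinEquiv
      (Matrix.fromBlocks A 0 0 (Aᵀ)⁻¹ * Matrix.fromBlocks 1 Z 0 1)

private lemma cv20 {α : Type*} (a b : α) : ![a,b] 0 = a := rfl
private lemma cv21 {α : Type*} (a b : α) : ![a,b] 1 = b := rfl
private lemma cv30 {α : Type*} (a b c : α) : ![a,b,c] 0 = a := rfl
private lemma cv31 {α : Type*} (a b c : α) : ![a,b,c] 1 = b := rfl
private lemma cv32 {α : Type*} (a b c : α) : ![a,b,c] 2 = c := rfl
private lemma cv60 {α : Type*} (a b c d e f : α) : ![a,b,c,d,e,f] 0 = a := rfl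
private lemma cv61 {α : Type*} (a b c d e f : α) : ![a,b,c,d,e,f] 1 = b := rfl
private lemma cv62 {α : Type*} (a b c d e f : α) : ![a,b,c,d,e,f] 2 = c := rfl
private lemma cv63 {α : Type*} (a b c d e f : α) : ![a,b,c,d,e,f] 3 = d := rfl
private lemma cv64 {α : Type*} (a b c d e f : α) : ![a,b,c,d,e,f] 4 = e := rfl
private lemma cv65 {α : Type*} (a b c d e f : α) : ![a,b,c,d,e,f] 5 = f := rfl
private lemma fm60 (h : (0:ℕ) < 6) : (⟨0, h⟩ : Fin 6) = 0 := rfl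
private lemma fm61 (h : (1:ℕ) < 6) : (⟨1, h⟩ : Fin 6) = 1 := rfl
private lemma fm62 (h : (2:ℕ) < 6) : (⟨2, h⟩ : Fin 6) = 2 := rfl
private lemma fm63 (h : (3:ℕ) < 6) : (⟨3, h⟩ : Fin 6) = 3 := rfl
private lemma fm64 (h : (4:ℕ) < 6) : (⟨4, h⟩ : Fin 6) = 4 := rfl
private lemma fm65 (h : (5:ℕ) < 6) : (⟨5, h⟩ : Fin 6) = 5 := rfl
private lemma fm30 (h : (0:ℕ) < 3) : (⟨0, h⟩ : Fin 3) = 0 := rfl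
private lemma fm31 (h : (1:ℕ) < 3) : (⟨1, h⟩ : Fin 3) = 1 := rfl
private lemma fm32 (h : (2:ℕ) < 3) : (⟨2, h⟩ : Fin 3) = 2 := rfl

private lemma interleave_eq' (R : Type*) [CommRing R] (g : Fin 3 → Matrix (Fin 2) (Fin 2) R) :
    interleave R g = !![g 0 0 0, 0, 0, g 0 0 1, 0, 0;
                        0, g 1 0 0, 0, 0, g 1 0 1, 0;
                        0, 0, g 2 0 0, 0, 0, g 2 0 1;
                        g 0 1 0, 0, 0, g 0 1 1, 0, 0;
                        0, g 1 1 0, 0, 0, g 1 1 1, 0;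
                        0, 0, g 2 1 0, 0, 0, g 2 1 1] := by
  ext i j; fin_cases i <;> fin_cases j <;> rfl

private lemma reindex_blocks' (R : Type*) [CommRing R] (A C D B : Matrix (Fin 3) (Fin 3) R) :
    Matrix.reindex finSumFinEquiv finSumFinEquiv (Matrix.fromBlocks A C D B) =
    !![A 0 0, A 0 1, A 0 2, C 0 0, C 0 1, C 0 2;
       A 1 0, A 1 1, A 1 2, C 1 0, C 1 1, C 1 2;
       A 2 0, A 2 1, A 2 2, C 2 0, C 2 1, C 2 2;
       D 0 0, D 0 1, D 0 2, B 0 0, B 0 1, B 0 2;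
       D 1 0, D 1 1, D 1 2, B 1 0, B 1 1, B 1 2;
       D 2 0, D 2 1, D 2 2, B 2 0, B 2 1, B 2 2] := by
  ext i j; fin_cases i <;> fin_cases j <;> rfl

set_option maxHeartbeats 4000000 in
/-- Part (1) of Lemma 2.4 (lem:stab): the stabilizer of the point
`[P,P]·γ₀ ∈ [P,P]∖Sp₆` in `G = SL₂³` is exactly the group
`N₀ = {(( [[1,t₁],[0,1]], [[1,t₂],[0,1]], [[1,t₃],[0,1]] )) : t₁+t₂+t₃ = 0}`. -/
theorem stmt7 (R : Type*) [CommRing R] (u : Fin 3 → Matrix.SpecialLinearGroup (Fin 2) R) :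
    (∃ p : Matrix (Fin 6) (Fin 6) R, inPP R p ∧
        gamma0 R * interleave R (fun k => (u k : Matrix (Fin 2) (Fin 2) R)) = p * gamma0 R) ↔
      ∃ t : Fin 3 → R, t 0 + t 1 + t 2 = 0 ∧
        ∀ i, (u i : Matrix (Fin 2) (Fin 2) R) = !![1, t i; 0, 1] := by
  constructor
  · rintro ⟨p, ⟨A, Z, hdet, hsym, hp⟩, heq⟩
    subst hp
    rw [Matrix.fromBlocks_multiply] at heq
    simp only [Matrix.mul_one, Matrix.mul_zero, Matrix.zero_mul, Matrix.one_mul, add_zero,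
      zero_add] at heq
    rw [interleave_eq', reindex_blocks'] at heq
    have h := fun i j => congrFun (congrFun heq i) j
    have e00 := h 0 0
    simp only [gamma0, Matrix.mul_apply, Matrix.of_apply, Matrix.zero_apply, Fin.sum_univ_six, Fin.sum_univ_three, cv60, cv61, cv62, cv63, cv64, cv65, cv30, cv31, cv32] at e00
    have e01 := h 0 1
    simp only [gamma0, Matrix.mul_apply, Matrix.of_apply, Matrix.zero_apply, Fin.sum_univ_six, Fin.sum_univ_three, cv60, cv61, cv62, cv63, cv64, cv65, cv30, cv31, cv32] at e01
    have e02 := h 0 2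
    simp only [gamma0, Matrix.mul_apply, Matrix.of_apply, Matrix.zero_apply, Fin.sum_univ_six, Fin.sum_univ_three, cv60, cv61, cv62, cv63, cv64, cv65, cv30, cv31, cv32] at e02
    have e03 := h 0 3
    simp only [gamma0, Matrix.mul_apply, Matrix.of_apply, Matrix.zero_apply, Fin.sum_univ_six, Fin.sum_univ_three, cv60, cv61, cv62, cv63, cv64, cv65, cv30, cv31, cv32] at e03
    have e04 := h 0 4
    simp only [gamma0, Matrix.mul_apply, Matrix.of_apply, Matrix.zero_apply, Fin.sum_univ_six, Fin.sum_univ_three, cv60, cv61, cv62, cv63, cv64, cv65, cv30, cv31, cv32] at e04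
    have e05 := h 0 5
    simp only [gamma0, Matrix.mul_apply, Matrix.of_apply, Matrix.zero_apply, Fin.sum_univ_six, Fin.sum_univ_three, cv60, cv61, cv62, cv63, cv64, cv65, cv30, cv31, cv32] at e05
    have e10 := h 1 0
    simp only [gamma0, Matrix.mul_apply, Matrix.of_apply, Matrix.zero_apply, Fin.sum_univ_six, Fin.sum_univ_three, cv60, cv61, cv62, cv63, cv64, cv65, cv30, cv31, cv32] at e10
    have e11 := h 1 1
    simp only [gamma0, Matrix.mul_apply, Matrix.of_apply, Matrix.zero_apply, Fin.sum_univ_six, Fin.sum_univ_three, cv60, cv61, cv62, cv63, cv64, cv65, cv30, cv31, cv32] at e11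
    have e12 := h 1 2
    simp only [gamma0, Matrix.mul_apply, Matrix.of_apply, Matrix.zero_apply, Fin.sum_univ_six, Fin.sum_univ_three, cv60, cv61, cv62, cv63, cv64, cv65, cv30, cv31, cv32] at e12
    have e13 := h 1 3
    simp only [gamma0, Matrix.mul_apply, Matrix.of_apply, Matrix.zero_apply, Fin.sum_univ_six, Fin.sum_univ_three, cv60, cv61, cv62, cv63, cv64, cv65, cv30, cv31, cv32] at e13
    have e14 := h 1 4
    simp only [gamma0, Matrix.mul_apply, Matrix.of_apply, Matrix.zero_apply, Fin.sum_univ_six, Fin.sum_univ_three, cv60, cv61, cv62, cv63, cv64, cv65, cv30, cv31, cv32] at e14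
    have e15 := h 1 5
    simp only [gamma0, Matrix.mul_apply, Matrix.of_apply, Matrix.zero_apply, Fin.sum_univ_six, Fin.sum_univ_three, cv60, cv61, cv62, cv63, cv64, cv65, cv30, cv31, cv32] at e15
    have e20 := h 2 0
    simp only [gamma0, Matrix.mul_apply, Matrix.of_apply, Matrix.zero_apply, Fin.sum_univ_six, Fin.sum_univ_three, cv60, cv61, cv62, cv63, cv64, cv65, cv30, cv31, cv32] at e20
    have e21 := h 2 1
    simp only [gamma0, Matrix.mul_apply, Matrix.of_apply, Matrix.zero_apply, Fin.sum_univ_six, Fin.sum_univ_three, cv60, cv61, cv62, cv63, cv64, cv65, cv30, cv31, cv32] at e21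
    have e22 := h 2 2
    simp only [gamma0, Matrix.mul_apply, Matrix.of_apply, Matrix.zero_apply, Fin.sum_univ_six, Fin.sum_univ_three, cv60, cv61, cv62, cv63, cv64, cv65, cv30, cv31, cv32] at e22
    have e23 := h 2 3
    simp only [gamma0, Matrix.mul_apply, Matrix.of_apply, Matrix.zero_apply, Fin.sum_univ_six, Fin.sum_univ_three, cv60, cv61, cv62, cv63, cv64, cv65, cv30, cv31, cv32] at e23
    have e24 := h 2 4
    simp only [gamma0, Matrix.mul_apply, Matrix.of_apply, Matrix.zero_apply, Fin.sum_univ_six, Fin.sum_univ_three, cv60, cv61, cv62, cv63, cv64, cv65, cv30, cv31, cv32] at e24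
    have e25 := h 2 5
    simp only [gamma0, Matrix.mul_apply, Matrix.of_apply, Matrix.zero_apply, Fin.sum_univ_six, Fin.sum_univ_three, cv60, cv61, cv62, cv63, cv64, cv65, cv30, cv31, cv32] at e25
    have e30 := h 3 0
    simp only [gamma0, Matrix.mul_apply, Matrix.of_apply, Matrix.zero_apply, Fin.sum_univ_six, Fin.sum_univ_three, cv60, cv61, cv62, cv63, cv64, cv65, cv30, cv31, cv32] at e30
    have e31 := h 3 1
    simp only [gamma0, Matrix.mul_apply, Matrix.of_apply, Matrix.zero_apply, Fin.sum_univ_six, Fin.sum_univ_three, cv60, cv61, cv62, cv63, cv64, cv65, cv30, cv31, cv32] at e31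
    have e32 := h 3 2
    simp only [gamma0, Matrix.mul_apply, Matrix.of_apply, Matrix.zero_apply, Fin.sum_univ_six, Fin.sum_univ_three, cv60, cv61, cv62, cv63, cv64, cv65, cv30, cv31, cv32] at e32
    have e33 := h 3 3
    simp only [gamma0, Matrix.mul_apply, Matrix.of_apply, Matrix.zero_apply, Fin.sum_univ_six, Fin.sum_univ_three, cv60, cv61, cv62, cv63, cv64, cv65, cv30, cv31, cv32] at e33
    have e34 := h 3 4
    simp only [gamma0, Matrix.mul_apply, Matrix.of_apply, Matrix.zero_apply, Fin.sum_univ_six, Fin.sum_univ_three, cv60, cv61, cv62, cv63, cv64, cv65, cv30, cv31, cv32] at e34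
    have e35 := h 3 5
    simp only [gamma0, Matrix.mul_apply, Matrix.of_apply, Matrix.zero_apply, Fin.sum_univ_six, Fin.sum_univ_three, cv60, cv61, cv62, cv63, cv64, cv65, cv30, cv31, cv32] at e35
    have e40 := h 4 0
    simp only [gamma0, Matrix.mul_apply, Matrix.of_apply, Matrix.zero_apply, Fin.sum_univ_six, Fin.sum_univ_three, cv60, cv61, cv62, cv63, cv64, cv65, cv30, cv31, cv32] at e40
    have e41 := h 4 1
    simp only [gamma0, Matrix.mul_apply, Matrix.of_apply, Matrix.zero_apply, Fin.sum_univ_six, Fin.sum_univ_three, cv60, cv61, cv62, cv63, cv64, cv65, cv30, cv31, cv32] at e41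
    have e42 := h 4 2
    simp only [gamma0, Matrix.mul_apply, Matrix.of_apply, Matrix.zero_apply, Fin.sum_univ_six, Fin.sum_univ_three, cv60, cv61, cv62, cv63, cv64, cv65, cv30, cv31, cv32] at e42
    have e43 := h 4 3
    simp only [gamma0, Matrix.mul_apply, Matrix.of_apply, Matrix.zero_apply, Fin.sum_univ_six, Fin.sum_univ_three, cv60, cv61, cv62, cv63, cv64, cv65, cv30, cv31, cv32] at e43
    have e44 := h 4 4
    simp only [gamma0, Matrix.mul_apply, Matrix.of_apply, Matrix.zero_apply, Fin.sum_univ_six, Fin.sum_univ_three, cv60, cv61, cv62, cv63, cv64, cv65, cv30, cv31, cv32] at e44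
    have e45 := h 4 5
    simp only [gamma0, Matrix.mul_apply, Matrix.of_apply, Matrix.zero_apply, Fin.sum_univ_six, Fin.sum_univ_three, cv60, cv61, cv62, cv63, cv64, cv65, cv30, cv31, cv32] at e45
    have e50 := h 5 0
    simp only [gamma0, Matrix.mul_apply, Matrix.of_apply, Matrix.zero_apply, Fin.sum_univ_six, Fin.sum_univ_three, cv60, cv61, cv62, cv63, cv64, cv65, cv30, cv31, cv32] at e50
    have e51 := h 5 1
    simp only [gamma0, Matrix.mul_apply, Matrix.of_apply, Matrix.zero_apply, Fin.sum_univ_six, Fin.sum_univ_three, cv60, cv61, cv62, cv63, cv64, cv65, cv30, cv31, cv32] at e51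
    have e52 := h 5 2
    simp only [gamma0, Matrix.mul_apply, Matrix.of_apply, Matrix.zero_apply, Fin.sum_univ_six, Fin.sum_univ_three, cv60, cv61, cv62, cv63, cv64, cv65, cv30, cv31, cv32] at e52
    have e53 := h 5 3
    simp only [gamma0, Matrix.mul_apply, Matrix.of_apply, Matrix.zero_apply, Fin.sum_univ_six, Fin.sum_univ_three, cv60, cv61, cv62, cv63, cv64, cv65, cv30, cv31, cv32] at e53
    have e54 := h 5 4
    simp only [gamma0, Matrix.mul_apply, Matrix.of_apply, Matrix.zero_apply, Fin.sum_univ_six, Fin.sum_univ_three, cv60, cv61, cv62, cv63, cv64, cv65, cv30, cv31, cv32] at e54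
    have e55 := h 5 5
    simp only [gamma0, Matrix.mul_apply, Matrix.of_apply, Matrix.zero_apply, Fin.sum_univ_six, Fin.sum_univ_three, cv60, cv61, cv62, cv63, cv64, cv65, cv30, cv31, cv32] at e55
    clear h heq
    have detu0 := (u 0).prop
    rw [Matrix.det_fin_two] at detu0
    have hc0 : (u 0 : Matrix (Fin 2) (Fin 2) R) 1 0 = 0 := by linear_combination e42 - e40
    have hc1 : (u 1 : Matrix (Fin 2) (Fin 2) R) 1 0 = 0 := by linear_combination e41 - e42
    have hc2 : (u 2 : Matrix (Fin 2) (Fin 2) R) 1 0 = 0 := by linear_combination e52 - e51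
    have ha1 : (u 1 : Matrix (Fin 2) (Fin 2) R) 0 0 = (u 0 : Matrix (Fin 2) (Fin 2) R) 0 0 := by
      linear_combination e31 - e30
    have ha2 : (u 2 : Matrix (Fin 2) (Fin 2) R) 0 0 = (u 0 : Matrix (Fin 2) (Fin 2) R) 0 0 := by
      linear_combination e32 - e30
    have hd1 : (u 1 : Matrix (Fin 2) (Fin 2) R) 1 1 = (u 0 : Matrix (Fin 2) (Fin 2) R) 1 1 := by
      linear_combination e43 + e44 + e45
    have hd2 : (u 2 : Matrix (Fin 2) (Fin 2) R) 1 1 = (u 0 : Matrix (Fin 2) (Fin 2) R) 1 1 := by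
      linear_combination e53 + e55 + e54
    have hA00 : A 0 0 = (u 0 : Matrix (Fin 2) (Fin 2) R) 1 1 := by
      linear_combination e03 + e04 + e05
    have hA01 : A 0 1 = 0 := by linear_combination -e01 + e00 + hc0
    have hA02 : A 0 2 = 0 := by linear_combination -e02 + e00 + hc0
    have hA10 : A 1 0 = -((u 1 : Matrix (Fin 2) (Fin 2) R) 0 1) := by
      linear_combination e13 + e14 + e15
    have hA11 : A 1 1 = (u 1 : Matrix (Fin 2) (Fin 2) R) 0 0 := by linear_combination -e11 + e10
    have hA12 : A 1 2 = 0 := by linear_combination -e12 + e10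
    have hA20 : A 2 0 = -((u 2 : Matrix (Fin 2) (Fin 2) R) 0 1) := by
      linear_combination e23 + e25 + e24
    have hA21 : A 2 1 = 0 := by linear_combination -e21 + e20
    have hA22 : A 2 2 = (u 2 : Matrix (Fin 2) (Fin 2) R) 0 0 := by linear_combination -e22 + e20
    rw [Matrix.det_fin_three, hA00, hA01, hA02, hA10, hA11, hA12, hA20, hA21, hA22] at hdet
    have haux : (u 0 : Matrix (Fin 2) (Fin 2) R) 0 0 * (u 0 : Matrix (Fin 2) (Fin 2) R) 1 1
        = 1 := by
      linear_combination detu0 + (u 0 : Matrix (Fin 2) (Fin 2) R) 0 1 * hc0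
    have hkey : (u 0 : Matrix (Fin 2) (Fin 2) R) 1 1 * ((u 0 : Matrix (Fin 2) (Fin 2) R) 0 0 *
        (u 0 : Matrix (Fin 2) (Fin 2) R) 0 0) = 1 := by
      linear_combination hdet - (u 0 : Matrix (Fin 2) (Fin 2) R) 1 1 *
        (u 2 : Matrix (Fin 2) (Fin 2) R) 0 0 * ha1 - (u 0 : Matrix (Fin 2) (Fin 2) R) 1 1 *
        (u 0 : Matrix (Fin 2) (Fin 2) R) 0 0 * ha2
    have ha0 : (u 0 : Matrix (Fin 2) (Fin 2) R) 0 0 = 1 := by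
      linear_combination hkey - (u 0 : Matrix (Fin 2) (Fin 2) R) 0 0 * haux
    have hd0 : (u 0 : Matrix (Fin 2) (Fin 2) R) 1 1 = 1 := by
      linear_combination haux - (u 0 : Matrix (Fin 2) (Fin 2) R) 1 1 * ha0
    have ha1' : (u 1 : Matrix (Fin 2) (Fin 2) R) 0 0 = 1 := by linear_combination ha1 + ha0
    have ha2' : (u 2 : Matrix (Fin 2) (Fin 2) R) 0 0 = 1 := by linear_combination ha2 + ha0
    have hd1' : (u 1 : Matrix (Fin 2) (Fin 2) R) 1 1 = 1 := by linear_combination hd1 + hd0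
    have hd2' : (u 2 : Matrix (Fin 2) (Fin 2) R) 1 1 = 1 := by linear_combination hd2 + hd0
    have g0 : (u 0 : Matrix (Fin 2) (Fin 2) R) = !![1, (u 0 : Matrix (Fin 2) (Fin 2) R) 0 1;
        0, 1] := by
      rw [Matrix.eta_fin_two (u 0 : Matrix (Fin 2) (Fin 2) R), ha0, hc0, hd0]
      rfl
    have g1 : (u 1 : Matrix (Fin 2) (Fin 2) R) = !![1, (u 1 : Matrix (Fin 2) (Fin 2) R) 0 1;
        0, 1] := by
      rw [Matrix.eta_fin_two (u 1 : Matrix (Fin 2) (Fin 2) R), ha1', hc1, hd1']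
      rfl
    have g2 : (u 2 : Matrix (Fin 2) (Fin 2) R) = !![1, (u 2 : Matrix (Fin 2) (Fin 2) R) 0 1;
        0, 1] := by
      rw [Matrix.eta_fin_two (u 2 : Matrix (Fin 2) (Fin 2) R), ha2', hc2, hd2']
      rfl
    refine ⟨fun k => (u k : Matrix (Fin 2) (Fin 2) R) 0 1, ?_, ?_⟩
    · linear_combination e33 + e34 + e35
    · intro i
      fin_cases i
      · exact g0
      · exact g1
      · exact g2
  · rintro ⟨t, hsum, hu⟩
    refine ⟨_, ⟨!![1,0,0; -t 1,1,0; -t 2,0,1], !![0,0,0; 0,t 1,0; 0,0,t 2], ?_, ?_, rfl⟩, ?_⟩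
    · rw [Matrix.det_fin_three]
      simp only [Matrix.of_apply, cv30, cv31, cv32]
      ring
    · have hZ : (!![0,0,0; 0,t 1,0; 0,0,t 2] : Matrix (Fin 3) (Fin 3) R)ᵀ =
          !![0,0,0; 0,t 1,0; 0,0,t 2] := by
        ext i j; fin_cases i <;> fin_cases j <;> rfl
      exact hZ
    · have hT : (!![1,0,0; -t 1,1,0; -t 2,0,1] : Matrix (Fin 3) (Fin 3) R)ᵀ =
          !![1,-t 1,-t 2; 0,1,0; 0,0,1] := by
        ext i j; fin_cases i <;> fin_cases j <;> rfl
      have hB : ((!![1,0,0; -t 1,1,0; -t 2,0,1] : Matrix (Fin 3) (Fin 3) R)ᵀ)⁻¹ =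
          !![1, t 1, t 2; 0,1,0; 0,0,1] := by
        apply Matrix.inv_eq_right_inv
        rw [hT, show (1 : Matrix (Fin 3) (Fin 3) R) = !![1,0,0;0,1,0;0,0,1] from
          Matrix.one_fin_three]
        ext i j
        fin_cases i <;> fin_cases j <;>
          simp only [Matrix.mul_apply, Fin.sum_univ_three, Matrix.of_apply,
            fm30, fm31, fm32, cv30, cv31, cv32] <;>
          ring1
      rw [Matrix.fromBlocks_multiply]
      simp only [Matrix.mul_one, Matrix.mul_zero, Matrix.zero_mul, Matrix.one_mul, add_zero,
        zero_add]
      rw [interleave_eq', hB, reindex_blocks']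
      simp only [hu]
      ext i j
      fin_cases i <;> fin_cases j <;>
        simp only [gamma0, Matrix.mul_apply, Matrix.of_apply, Matrix.zero_apply,
          Fin.sum_univ_six, Fin.sum_univ_three, fm60, fm61, fm62, fm63, fm64, fm65,
          cv60, cv61, cv62, cv63, cv64, cv65, cv30, cv31, cv32, cv20, cv21] <;>
        first
          | linear_combination hsum
          | linear_combination -hsum
          | ring1
end

section
/- Let F = ℝ or ℂ. Let d₁, d₂, d₃ be positive even integers and N₁, N₂, N₃ positive reals with Nᵢ > dᵢ/2 + 1. Then there is a constant C (depending on the Nᵢ, dᵢ) such that for all v = (v₁,v₂,v₃) with each vᵢ ∈ F^{dᵢ} ∖ {0}, ∫_{(F^×)³} ∏_{i=1}^{3} max(|aᵢ⁻¹vᵢ|,1)^{−Nᵢ} |aᵢ|^{−1−dᵢ/2} 1_{|aᵢ| ≤ 1} d^×a ≤ C · ∏_{i=1}^{3} max(|vᵢ|,1)^{−Nᵢ} min(|vᵢ|,1)^{−1−dᵢ/2}. -/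
/-!
Each factor of the integrand depends on one coordinate, so the integral over `ℝ³` is the product
of three integrals over `ℝ`. For `0 < |a| ≤ 1`, `t = ‖v‖ > 0` and `m = min t 1` one has
`max (t / |a|) 1 ^ (-N) = max t 1 ^ (-N) * min (|a| / m) 1 ^ N`, so a factor is at most
`max t 1 ^ (-N)` times `∫ min (|a| / m) 1 ^ N * |a| ^ (-2 - δ) da`. Splitting at `|a| = m`, this
integral equals `m ^ (-1 - δ)` times a constant, finite exactly because `-1 < δ` and `δ + 1 < N`.
-/

open MeasureTheory Set

open scoped ENNReal

theorem lintegral_fin_nat_prod_eq_prod {n : ℕ} {E : Type*} [MeasurableSpace E]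
    {μ : Fin n → Measure E} [∀ i, SigmaFinite (μ i)] {f : Fin n → E → ℝ≥0∞}
    (hf : ∀ i, Measurable (f i)) :
    ∫⁻ x : Fin n → E, ∏ i, f i (x i) ∂(Measure.pi μ) = ∏ i, ∫⁻ x, f i x ∂(μ i) := by
  induction n with
  | zero => simp
  | succ n ih =>
    calc
      _ = ∫⁻ x : E × (Fin n → E),
            f 0 x.1 * ∏ i : Fin n, f (Fin.succ i) (x.2 i)
            ∂((μ 0).prod (Measure.pi (fun i ↦ μ i.succ))) := by
        rw [← ((measurePreserving_piFinSuccAbove μ 0).symm).lintegral_comp_emb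
          (MeasurableEquiv.measurableEmbedding _)]
        simp_rw [MeasurableEquiv.piFinSuccAbove_symm_apply, Fin.insertNthEquiv,
          Fin.prod_univ_succ, Fin.insertNth_zero, Equiv.coe_fn_mk, Fin.cons_succ,
          Fin.zero_succAbove, cast_eq, Fin.cons_zero]
      _ = (∫⁻ x, f 0 x ∂μ 0) * ∏ i : Fin n, ∫⁻ x, f i.succ x ∂μ i.succ := by
        have h_tail : Measurable fun y : Fin n → E ↦ ∏ i : Fin n, f i.succ (y i) :=
          Finset.measurable_prod _ fun i _ ↦ (hf i.succ).comp (measurable_pi_apply i)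
        rw [← ih fun i ↦ hf i.succ, ← lintegral_prod_mul (hf 0).aemeasurable h_tail.aemeasurable]
      _ = ∏ i, ∫⁻ x, f i x ∂(μ i) := (Fin.prod_univ_succ fun i ↦ ∫⁻ x, f i x ∂μ i).symm

theorem lintegral_comp_abs (f : ℝ → ℝ≥0∞) :
    ∫⁻ x, f |x| = 2 * ∫⁻ x in Ioi 0, f x := by
  have hpos : ∫⁻ x in Ioi 0, f |x| = ∫⁻ x in Ioi 0, f x :=
    setLIntegral_congr_fun measurableSet_Ioi fun x hx ↦ by rw [abs_of_pos hx]
  have hneg : ∫⁻ x in Iic 0, f |x| = ∫⁻ x in Ioi 0, f x := by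
    rw [← hpos, ← setLIntegral_congr Ioi_ae_eq_Ici.symm]
    have := (Measure.measurePreserving_neg (volume : Measure ℝ)).setLIntegral_comp_preimage_emb
      (MeasurableEquiv.neg ℝ).measurableEmbedding (fun x ↦ f |x|) (Ici 0)
    simpa [abs_neg] using this
  rw [← lintegral_add_compl _ (measurableSet_Ioi (a := (0 : ℝ))), compl_Ioi, hpos, hneg,
    two_mul]

theorem lintegral_Ioc_rpow {s m : ℝ} (hs : -1 < s) (hm : 0 ≤ m) :
    ∫⁻ x in Ioc 0 m, ENNReal.ofReal (x ^ s) = ENNReal.ofReal (m ^ (s + 1) / (s + 1)) := by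
  rw [← ofReal_integral_eq_lintegral_ofReal (intervalIntegral.intervalIntegrable_rpow' hs).1
    ((ae_restrict_iff' measurableSet_Ioc).2 (ae_of_all _ fun x hx ↦ Real.rpow_nonneg hx.1.le s)),
    ← intervalIntegral.integral_of_le hm, integral_rpow (Or.inl hs),
    Real.zero_rpow (by linarith), sub_zero]

theorem lintegral_Ioi_rpow {r m : ℝ} (hr : r < -1) (hm : 0 < m) :
    ∫⁻ x in Ioi m, ENNReal.ofReal (x ^ r) = ENNReal.ofReal (-m ^ (r + 1) / (r + 1)) := by
  rw [← ofReal_integral_eq_lintegral_ofReal (integrableOn_Ioi_rpow_of_lt hr hm)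
    ((ae_restrict_iff' measurableSet_Ioi).2 (ae_of_all _ fun x hx ↦
      Real.rpow_nonneg (hm.trans hx).le r)), integral_Ioi_rpow_of_lt hr hm]

theorem lintegral_Ioi_min_div_rpow_mul_rpow {m p r : ℝ} (hm : 0 < m) (hr : r < -1)
    (hpr : -1 < p + r) :
    ∫⁻ x in Ioi 0, ENNReal.ofReal (min (x / m) 1 ^ p * x ^ r) =
      ENNReal.ofReal (m ^ (r + 1) * (1 / (p + r + 1) - 1 / (r + 1))) := by
  have h_small : ∫⁻ x in Ioc 0 m, ENNReal.ofReal (min (x / m) 1 ^ p * x ^ r) =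
      ENNReal.ofReal (m ^ (r + 1) / (p + r + 1)) := by
    have h_eq : EqOn (fun x ↦ ENNReal.ofReal (min (x / m) 1 ^ p * x ^ r))
        (fun x ↦ ENNReal.ofReal (m ^ (-p)) * ENNReal.ofReal (x ^ (p + r))) (Ioc 0 m) := by
      intro x hx
      dsimp only
      rw [← ENNReal.ofReal_mul (by positivity), min_eq_left ((div_le_one hm).2 hx.2),
        Real.div_rpow hx.1.le hm.le, Real.rpow_neg hm.le, Real.rpow_add hx.1]
      congr 1
      ring
    rw [setLIntegral_congr_fun measurableSet_Ioc h_eq,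
      lintegral_const_mul' _ _ ENNReal.ofReal_ne_top, lintegral_Ioc_rpow hpr hm.le,
      ← ENNReal.ofReal_mul (by positivity), mul_div_assoc', ← Real.rpow_add hm]
    ring_nf
  have h_large : ∫⁻ x in Ioi m, ENNReal.ofReal (min (x / m) 1 ^ p * x ^ r) =
      ENNReal.ofReal (-m ^ (r + 1) / (r + 1)) := by
    rw [← lintegral_Ioi_rpow hr hm]
    refine setLIntegral_congr_fun measurableSet_Ioi fun x hx ↦ ?_
    rw [min_eq_right ((one_le_div hm).2 hx.le), Real.one_rpow, one_mul]
  have h_small_nonneg : 0 ≤ m ^ (r + 1) / (p + r + 1) :=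
    div_nonneg (by positivity) (by linarith)
  have h_large_nonneg : 0 ≤ -m ^ (r + 1) / (r + 1) :=
    div_nonneg_of_nonpos (by simp only [neg_nonpos]; positivity) (by linarith)
  rw [← Ioc_union_Ioi_eq_Ioi hm.le, lintegral_union measurableSet_Ioi Ioc_disjoint_Ioi_same,
    h_small, h_large, ← ENNReal.ofReal_add h_small_nonneg h_large_nonneg]
  congr 1
  ring

theorem max_inv_mul_one_rpow_neg {x t : ℝ} (N : ℝ) (hx : 0 < x) (hx1 : x ≤ 1) (ht : 0 < t) :
    max (x⁻¹ * t) 1 ^ (-N) = max t 1 ^ (-N) * min (x / min t 1) 1 ^ N := by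
  rcases le_total t 1 with ht1 | ht1
  · rw [min_eq_left ht1, max_eq_right ht1, Real.one_rpow, one_mul]
    rcases le_total x t with hxt | hxt
    · rw [max_eq_left ((one_le_inv_mul₀ hx).2 hxt), min_eq_left ((div_le_one ht).2 hxt),
        Real.rpow_neg (by positivity), ← Real.inv_rpow (by positivity), mul_inv, inv_inv,
        div_eq_mul_inv, mul_comm]
    · rw [max_eq_right ((inv_mul_le_one₀ hx).2 hxt), min_eq_right ((one_le_div ht).2 hxt),
        Real.one_rpow, Real.one_rpow]
  · rw [min_eq_right ht1, max_eq_left ht1, div_one, min_eq_left hx1,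
      max_eq_left ((one_le_inv_mul₀ hx).2 (hx1.trans ht1)), Real.mul_rpow (by positivity) ht.le,
      Real.inv_rpow hx.le, ← Real.rpow_neg hx.le, neg_neg, mul_comm]

section TruncatedWeight

variable {E : Type*} [NormedAddCommGroup E] [NormedSpace ℝ E]

noncomputable def truncatedWeight (N δ : ℝ) (v : E) (a : ℝ) : ℝ :=
  max ‖a⁻¹ • v‖ 1 ^ (-N) * |a| ^ (-1 - δ) * (if |a| ≤ 1 then 1 else 0) / |a|

theorem truncatedWeight_nonneg (N δ : ℝ) (v : E) (a : ℝ) : 0 ≤ truncatedWeight N δ v a := by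
  unfold truncatedWeight
  split_ifs <;> positivity

theorem measurable_truncatedWeight (N δ : ℝ) (v : E) : Measurable (truncatedWeight N δ v) := by
  unfold truncatedWeight
  simp only [norm_smul]
  refine ((((measurable_inv.norm.mul_const _).max measurable_const).pow_const _).mul
    (measurable_abs.pow_const _)).mul ?_ |>.div measurable_abs
  exact Measurable.ite (measurableSet_le measurable_abs measurable_const) measurable_const
    measurable_const

theorem truncatedWeight_abs (N δ : ℝ) (v : E) (a : ℝ) :
    truncatedWeight N δ v |a| = truncatedWeight N δ v a := by
  simp only [truncatedWeight, abs_abs, norm_smul, norm_inv, Real.norm_eq_abs]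

theorem truncatedWeight_le {N δ x : ℝ} {v : E} (hv : v ≠ 0) (hx : 0 < x) :
    truncatedWeight N δ v x ≤
      max ‖v‖ 1 ^ (-N) * (min (x / min ‖v‖ 1) 1 ^ N * x ^ (-2 - δ)) := by
  rw [truncatedWeight, norm_smul, norm_inv, Real.norm_eq_abs, abs_of_pos hx]
  split_ifs with hx1
  · rw [max_inv_mul_one_rpow_neg N hx hx1 (norm_pos_iff.2 hv), mul_one, mul_div_assoc,
      ← Real.rpow_sub_one hx.ne', mul_assoc]
    exact le_of_eq (by ring_nf)
  · rw [mul_zero, zero_div]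
    positivity

theorem lintegral_truncatedWeight_le {N δ : ℝ} (hδ : -1 < δ) (hN : δ + 1 < N) {v : E}
    (hv : v ≠ 0) :
    ∫⁻ a, ENNReal.ofReal (truncatedWeight N δ v a) ≤
      ENNReal.ofReal (2 * (1 / (N - 1 - δ) + 1 / (1 + δ)) *
        (max ‖v‖ 1 ^ (-N) * min ‖v‖ 1 ^ (-1 - δ))) := by
  have hm : 0 < min ‖v‖ 1 := lt_min (norm_pos_iff.2 hv) one_pos
  calc ∫⁻ a, ENNReal.ofReal (truncatedWeight N δ v a)
      = 2 * ∫⁻ x in Ioi 0, ENNReal.ofReal (truncatedWeight N δ v x) := by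
        rw [← lintegral_comp_abs fun x ↦ ENNReal.ofReal (truncatedWeight N δ v x)]
        simp only [truncatedWeight_abs]
    _ ≤ 2 * ∫⁻ x in Ioi 0, ENNReal.ofReal (max ‖v‖ 1 ^ (-N)) *
          ENNReal.ofReal (min (x / min ‖v‖ 1) 1 ^ N * x ^ (-2 - δ)) := by
        gcongr 2 * ?_
        refine setLIntegral_mono' measurableSet_Ioi fun x hx ↦ ?_
        rw [← ENNReal.ofReal_mul (by positivity)]
        exact ENNReal.ofReal_le_ofReal (truncatedWeight_le hv hx)
    _ = ENNReal.ofReal (2 * (1 / (N - 1 - δ) + 1 / (1 + δ)) *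
          (max ‖v‖ 1 ^ (-N) * min ‖v‖ 1 ^ (-1 - δ))) := by
        rw [lintegral_const_mul' _ _ ENNReal.ofReal_ne_top,
          lintegral_Ioi_min_div_rpow_mul_rpow hm (by linarith) (by linarith),
          ← ENNReal.ofReal_mul (by positivity),
          ← ENNReal.ofReal_ofNat 2, ← ENNReal.ofReal_mul zero_le_two]
        have h_exp : -2 - δ + 1 = -1 - δ := by ring
        have h_const :
            1 / (N + (-2 - δ) + 1) - 1 / (-1 - δ) = 1 / (N - 1 - δ) + 1 / (1 + δ) := by
          rw [show N + (-2 - δ) + 1 = N - 1 - δ by ring, show -1 - δ = -(1 + δ) by ring,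
            div_neg, sub_neg_eq_add]
        rw [h_exp, h_const]
        congr 1
        ring

end TruncatedWeight

theorem stmt11_general (d : Fin 3 → ℕ) (N : Fin 3 → ℝ) (hN : ∀ i, (d i : ℝ) / 2 + 1 < N i) :
    ∃ C : ℝ, 0 < C ∧ ∀ v : (i : Fin 3) → (Fin (d i) → ℝ), (∀ i, v i ≠ 0) →
      (∫⁻ a : Fin 3 → ℝ, ENNReal.ofReal (∏ i,
          ((max ‖(a i)⁻¹ • v i‖ 1) ^ (-N i) * |a i| ^ (-1 - (d i : ℝ) / 2) *
            (if |a i| ≤ 1 then 1 else 0) / |a i|))) ≤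
        ENNReal.ofReal (C * ∏ i,
          (max ‖v i‖ 1) ^ (-N i) * (min ‖v i‖ 1) ^ (-1 - (d i : ℝ) / 2)) := by
  set δ : Fin 3 → ℝ := fun i ↦ (d i : ℝ) / 2
  have hδ : ∀ i, -1 < δ i := fun i ↦ neg_one_lt_zero.trans_le (by simp only [δ]; positivity)
  have hNδ : ∀ i, δ i + 1 < N i := hN
  have hC : ∀ i, 0 < 2 * (1 / (N i - 1 - δ i) + 1 / (1 + δ i)) := fun i ↦ by
    have : 0 < N i - 1 - δ i := by linarith [hNδ i]
    have : 0 < 1 + δ i := by linarith [hδ i]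
    positivity
  refine ⟨∏ i, 2 * (1 / (N i - 1 - δ i) + 1 / (1 + δ i)), Finset.prod_pos fun i _ ↦ hC i,
    fun v hv ↦ ?_⟩
  change ∫⁻ a : Fin 3 → ℝ, ENNReal.ofReal (∏ i, truncatedWeight (N i) (δ i) (v i) (a i)) ≤ _
  calc ∫⁻ a : Fin 3 → ℝ, ENNReal.ofReal (∏ i, truncatedWeight (N i) (δ i) (v i) (a i))
      = ∏ i, ∫⁻ x, ENNReal.ofReal (truncatedWeight (N i) (δ i) (v i) x) := by
        simp_rw [ENNReal.ofReal_prod_of_nonneg fun i _ ↦ truncatedWeight_nonneg _ _ _ _]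
        exact lintegral_fin_nat_prod_eq_prod fun i ↦
          (measurable_truncatedWeight _ _ _).ennreal_ofReal
    _ ≤ ∏ i, ENNReal.ofReal (2 * (1 / (N i - 1 - δ i) + 1 / (1 + δ i)) *
          (max ‖v i‖ 1 ^ (-N i) * min ‖v i‖ 1 ^ (-1 - δ i))) :=
        Finset.prod_le_prod' fun i _ ↦ lintegral_truncatedWeight_le (hδ i) (hNδ i) (hv i)
    _ = _ := by
        rw [← ENNReal.ofReal_prod_of_nonneg fun i _ ↦ mul_nonneg (hC i).le (by positivity),
          Finset.prod_mul_distrib]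

/-- The bound on expression (forlater) in the proof of Proposition 7.2
(prop:open:bound:a), over F = ℝ: for even `dᵢ > 0` and `Nᵢ > dᵢ/2 + 1`,
`∫_{(ℝ^×)³, |aᵢ|≤1} ∏ᵢ max(|aᵢ⁻¹vᵢ|,1)^{-Nᵢ} |aᵢ|^{-1-dᵢ/2} d^×a
  ≤ C ∏ᵢ max(|vᵢ|,1)^{-Nᵢ} min(|vᵢ|,1)^{-1-dᵢ/2}`
with `d^×aᵢ = daᵢ/|aᵢ|` and `|vᵢ|` the sup norm on ℝ^{dᵢ}. -/
theorem stmt11 (d : Fin 3 → ℕ) (hd : ∀ i, 0 < d i) (hde : ∀ i, Even (d i))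
    (N : Fin 3 → ℝ) (hN : ∀ i, (d i : ℝ) / 2 + 1 < N i) :
    ∃ C : ℝ, 0 < C ∧ ∀ v : (i : Fin 3) → (Fin (d i) → ℝ), (∀ i, v i ≠ 0) →
      (∫⁻ a : Fin 3 → ℝ, ENNReal.ofReal (∏ i,
          ((max ‖(a i)⁻¹ • v i‖ 1) ^ (-N i) * |a i| ^ (-1 - (d i : ℝ) / 2) *
            (if |a i| ≤ 1 then 1 else 0) / |a i|))) ≤
        ENNReal.ofReal (C * ∏ i,
          (max ‖v i‖ 1) ^ (-N i) * (min ‖v i‖ 1) ^ (-1 - (d i : ℝ) / 2)) :=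
  stmt11_general d N hN
end
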